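/- arXiv:2307.03037 — 4 statements merged into one kernel-verified Lean document; each statement's English description precedes it below -/
import Mathlib

section
/- Let p be a prime and i ≥ 0 an integer. Then the integer p^{i+1}! / ((p^i!)^p · p!) is not divisible by p. -/
/-!
The quotient is the uniform Bell number `B = uniformBell p n` with `n = p ^ i`, which satisfies
`B * (n !) ^ p * p ! = (p * n)!`. Comparing `p`-adic valuations with `v((p * n)!) = v(n !) + n`
and `v(p !) = 1` gives `v(B) = n - 1 - (p - 1) * v(n !)`, and by Legendre's formula
`(p - 1) * v(n !)` is `n` minus the base-`p` digit sum of `n`, which is `n - 1` for `n = p ^ i`.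
-/

open Nat

variable {p : ℕ} [Fact p.Prime]

theorem sub_one_mul_padicValNat_factorial_prime_pow (k : ℕ) :
    (p - 1) * padicValNat p (p ^ k)! = p ^ k - 1 := by
  have hp : 1 < p := (Fact.out : p.Prime).one_lt
  rw [sub_one_mul_padicValNat_factorial, ← mul_one (p ^ k), digits_base_pow_mul hp one_pos,
    digits_of_lt p 1 one_ne_zero hp]
  simp

theorem uniformBell_ne_zero (m : ℕ) {n : ℕ} (hn : n ≠ 0) : uniformBell m n ≠ 0 := by
  have h := uniformBell_mul_eq m hn
  intro h0
  rw [h0, zero_mul, zero_mul] at h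
  exact factorial_ne_zero _ h.symm

theorem padicValNat_uniformBell_prime {n : ℕ} (hn : n ≠ 0) :
    padicValNat p (uniformBell p n) = n - 1 - (p - 1) * padicValNat p n ! := by
  have hB := uniformBell_ne_zero p hn
  have hpow : n ! ^ p ≠ 0 := pow_ne_zero _ (factorial_ne_zero n)
  have hself : padicValNat p p ! = 1 := by
    simpa using padicValNat_factorial_mul (p := p) 1
  have hval := congrArg (padicValNat p) (uniformBell_mul_eq p hn)
  rw [padicValNat.mul (mul_ne_zero hB hpow) (factorial_ne_zero p), padicValNat.mul hB hpow,
    padicValNat.pow, hself, padicValNat_factorial_mul] at hval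
  have hp : 1 ≤ p := (Fact.out : p.Prime).one_le
  have hsplit : p * padicValNat p n ! = (p - 1) * padicValNat p n ! + padicValNat p n ! := by
    rw [Nat.sub_mul, one_mul, Nat.sub_add_cancel (Nat.le_mul_of_pos_left _ hp)]
  omega

theorem not_dvd_uniformBell_prime_pow (i : ℕ) : ¬ p ∣ uniformBell p (p ^ i) := by
  have hn : p ^ i ≠ 0 := pow_ne_zero _ (Fact.out : p.Prime).ne_zero
  intro hdvd
  have hpos := one_le_padicValNat_of_dvd (uniformBell_ne_zero p hn) hdvd
  rw [padicValNat_uniformBell_prime hn, sub_one_mul_padicValNat_factorial_prime_pow] at hpos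
  omega

/-- Let `p` be a prime and `i ≥ 0`. Then `(p^i!)^p * p!` divides `p^(i+1)!` and the
integer `p^(i+1)! / ((p^i!)^p * p!)` is not divisible by `p`. -/
theorem stmt1 (p i : ℕ) (hp : p.Prime) :
    (Nat.factorial (p ^ i) ^ p * Nat.factorial p) ∣ Nat.factorial (p ^ (i + 1)) ∧
    ¬ p ∣ Nat.factorial (p ^ (i + 1)) / (Nat.factorial (p ^ i) ^ p * Nat.factorial p) := by
  have : Fact p.Prime := ⟨hp⟩
  have hn : p ^ i ≠ 0 := pow_ne_zero _ hp.ne_zero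
  rw [pow_succ', ← uniformBell_eq_div p hn]
  exact ⟨⟨uniformBell p (p ^ i), by rw [← uniformBell_mul_eq p hn]; ring⟩,
    not_dvd_uniformBell_prime_pow i⟩
end

section
/- Let p be a prime and s ≥ 1. Then p^s! / (p^{p^{s−1}} · p^{s−1}!) ≡ −1 (mod p). That is, the number of ways to partition a set of p^s elements into p^{s−1} blocks of size p is congruent to −1 modulo p. -/
/-!
Grouping `1, …, p n` into the blocks `p k + 1, …, p k + p` gives
`(p n)! = p ^ n * n! * ∏_{k < n} ∏_{0 < j < p} (p k + j)`.
Modulo `p` each inner product is `(p - 1)! ≡ -1` by Wilson's theorem, so the quotient is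
`(-1) ^ n`, and `(-1) ^ (p ^ (s - 1)) = -1` in characteristic `p` (also for `p = 2`).
-/

open Finset Nat

namespace Nat

theorem prod_range_add_one_add_eq_prod_Ico_mul (a : ℕ) {p : ℕ} (hp : 0 < p) :
    ∏ i ∈ range p, (a + 1 + i) = (∏ j ∈ Ico 1 p, (a + j)) * (a + p) := by
  rw [← prod_Ico_succ_top hp, prod_Ico_eq_prod_range, Nat.add_sub_cancel]
  simp only [Nat.add_assoc]

theorem factorial_mul_eq_pow_mul_factorial_mul_prod {p : ℕ} (hp : 0 < p) (n : ℕ) :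
    (p * n)! = p ^ n * n ! * ∏ k ∈ range n, ∏ j ∈ Ico 1 p, (p * k + j) := by
  induction n with
  | zero => simp
  | succ n ih =>
    rw [Nat.mul_succ, ← factorial_mul_ascFactorial, ascFactorial_eq_prod_range,
      prod_range_add_one_add_eq_prod_Ico_mul _ hp, ih, prod_range_succ, factorial_succ,
      ← Nat.mul_succ, Nat.succ_eq_add_one]
    ring

end Nat

namespace ZMod

theorem prod_Ico_one_natCast_eq_neg_one (p : ℕ) [Fact p.Prime] :
    ∏ j ∈ Ico 1 p, (j : ZMod p) = -1 := by
  have h := prod_Ico_id_eq_factorial (p - 1)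
  rw [Nat.sub_add_cancel (Fact.out : p.Prime).one_le] at h
  rw [← Nat.cast_prod, h, wilsons_lemma]

theorem natCast_prod_prod_mul_add_eq_neg_one_pow (p : ℕ) [Fact p.Prime] (n : ℕ) :
    ((∏ k ∈ range n, ∏ j ∈ Ico 1 p, (p * k + j) : ℕ) : ZMod p) = (-1) ^ n := by
  simp only [Nat.cast_prod, Nat.cast_add, Nat.cast_mul, natCast_self, zero_mul, zero_add,
    prod_Ico_one_natCast_eq_neg_one, prod_const, card_range]

end ZMod

/-- For a prime `p` and `s ≥ 1`, `p^(p^(s-1)) * p^(s-1)!` divides `p^s!` and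
`p^s! / (p^(p^(s-1)) * p^(s-1)!) ≡ -1 (mod p)`. -/
theorem stmt7 (p s : ℕ) (hp : p.Prime) (hs : 1 ≤ s) :
    (p ^ p ^ (s - 1) * Nat.factorial (p ^ (s - 1))) ∣ Nat.factorial (p ^ s) ∧
    ((Nat.factorial (p ^ s) / (p ^ p ^ (s - 1) * Nat.factorial (p ^ (s - 1))) : ℕ) :
        ZMod p) = -1 := by
  have : Fact p.Prime := ⟨hp⟩
  have hps : p ^ s = p * p ^ (s - 1) := by
    rw [← pow_succ', Nat.succ_eq_add_one, Nat.sub_add_cancel hs]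
  have hfact := Nat.factorial_mul_eq_pow_mul_factorial_mul_prod hp.pos (p ^ (s - 1))
  rw [← hps] at hfact
  have hpos : 0 < p ^ p ^ (s - 1) * (p ^ (s - 1))! :=
    Nat.mul_pos (Nat.pow_pos hp.pos) (factorial_pos _)
  refine ⟨⟨_, hfact⟩, ?_⟩
  rw [hfact, Nat.mul_div_cancel_left _ hpos, ZMod.natCast_prod_prod_mul_add_eq_neg_one_pow,
    neg_one_pow_char_pow]
end

section
/- Let σ ∈ S_{st} be a product of s disjoint t-cycles whose union of supports is all of {1,…,st}. Then the centralizer of σ in S_{st} contains an st-cycle. -/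
/-!
By the hypothesis `σ` has cycle type `(t, …, t)` (`s` times). For an `st`-cycle `C` and `t ≥ 2`,
a point of `C ^ s` returns to itself after `k` steps exactly when `st ∣ sk`, i.e. `t ∣ k`, so
`C ^ s` has the same cycle type and hence `σ = v C ^ s v⁻¹ = (v C v⁻¹) ^ s` for some `v`.
The `st`-cycle `v C v⁻¹` then commutes with its own power `σ`.
-/

open Equiv Finset

namespace Equiv.Perm

variable {α : Type*} [Fintype α] [DecidableEq α]

theorem IsCycle.cycleType_pow {c : Perm α} (hc : c.IsCycle) {s t : ℕ}
    (hcard : #c.support = s * t) (ht : 2 ≤ t) :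
    (c ^ s).cycleType = Multiset.replicate s t := by
  have hs : 0 < s := Nat.pos_of_ne_zero fun h => by
    simpa [hcard, h] using hc.two_le_card_support
  have hsupp : (c ^ s).support = c.support :=
    hc.support_pow_of_pos_of_lt_orderOf hs (by rw [hc.orderOf, hcard]; nlinarith)
  have hentries : ∀ m ∈ (c ^ s).cycleType, m = t := by
    intro m hm
    rw [cycleType_def, Multiset.mem_map] at hm
    obtain ⟨d, hd, rfl⟩ := hm
    have hd' := mem_cycleFactorsFinset_iff.mp hd
    obtain ⟨x, hx⟩ := hd'.1.nonempty_support
    have hpow : ∀ k, d ^ k = 1 ↔ t ∣ k := by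
      intro k
      rw [hd'.1.pow_eq_one_iff' (mem_support.mp hx), cycle_is_cycleOf hx hd,
        cycleOf_pow_apply_self]
      have hxc : c x ≠ x :=
        mem_support.mp (support_pow_le c s (mem_cycleFactorsFinset_support_le hd hx))
      rw [← pow_mul, ← hc.pow_eq_one_iff' hxc, ← orderOf_dvd_iff_pow_eq_one, hc.orderOf, hcard,
        Nat.mul_dvd_mul_iff_left hs]
    rw [Function.comp_apply, ← hd'.1.orderOf]
    exact Nat.dvd_antisymm (orderOf_dvd_of_pow_eq_one ((hpow t).2 dvd_rfl))
      ((hpow _).1 (pow_orderOf_eq_one d))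
  have hsum := sum_cycleType (c ^ s)
  rw [Multiset.eq_replicate_of_mem hentries, Multiset.sum_replicate, smul_eq_mul, hsupp,
    hcard] at hsum
  rw [Multiset.eq_replicate_of_mem hentries, Nat.eq_of_mul_eq_mul_right (by omega) hsum]

theorem cycleType_eq_replicate_of_prod_eq {σ : Perm α} {t : ℕ} {l : List (Perm α)}
    (hσ : l.prod = σ) (hl : ∀ τ ∈ l, τ.IsCycle ∧ #τ.support = t) (hd : l.Pairwise Disjoint) :
    σ.cycleType = Multiset.replicate l.length t := by
  rw [cycleType_eq l hσ (fun τ hτ => (hl τ hτ).1) hd, Multiset.eq_replicate]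
  simpa using fun τ hτ => (hl τ hτ).2

end Equiv.Perm

theorem stmt10_general (s t : ℕ) (hs : 1 ≤ s) (σ : Equiv.Perm (Fin (s * t)))
    (h : ∃ l : List (Equiv.Perm (Fin (s * t))), l.length = s ∧
      (∀ τ ∈ l, τ.IsCycle ∧ τ.support.card = t) ∧
      List.Pairwise Equiv.Perm.Disjoint l ∧ σ = l.prod ∧ σ.support = Finset.univ) :
    ∃ c : Equiv.Perm (Fin (s * t)), c.IsCycle ∧ c.support.card = s * t ∧
      Commute c σ := by
  obtain ⟨l, hlen, hcyc, hdisj, hσ, -⟩ := h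
  have hσtype : σ.cycleType = Multiset.replicate s t :=
    (Perm.cycleType_eq_replicate_of_prod_eq hσ.symm hcyc hdisj).trans (by rw [hlen])
  have ht : 2 ≤ t :=
    Perm.two_le_of_mem_cycleType (hσtype ▸ Multiset.mem_replicate.2 ⟨by omega, rfl⟩)
  have hC : (finRotate (s * t)).IsCycle := isCycle_finRotate_of_le (by nlinarith)
  have hCcard : #(finRotate (s * t)).support = s * t := by
    rw [support_finRotate_of_le (by nlinarith), card_univ, Fintype.card_fin]
  obtain ⟨v, hv⟩ := isConj_iff.mp <| Perm.isConj_iff_cycleType_eq.mpr <|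
    (hC.cycleType_pow hCcard ht).trans hσtype.symm
  refine ⟨v * finRotate (s * t) * v⁻¹, hC.conj, by rw [Perm.card_support_conj, hCcard], ?_⟩
  rw [← hv, ← conj_pow]
  exact Commute.self_pow _ _

/-- If `σ ∈ S_{st}` is a product of `s` pairwise disjoint `t`-cycles whose supports
cover all of the `st` points, then the centralizer of `σ` contains an `st`-cycle. -/
theorem stmt10 (s t : ℕ) (hs : 1 ≤ s) (ht : 1 ≤ t) (σ : Equiv.Perm (Fin (s * t)))
    (h : ∃ l : List (Equiv.Perm (Fin (s * t))), l.length = s ∧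
      (∀ τ ∈ l, τ.IsCycle ∧ τ.support.card = t) ∧
      List.Pairwise Equiv.Perm.Disjoint l ∧ σ = l.prod ∧ σ.support = Finset.univ) :
    ∃ c : Equiv.Perm (Fin (s * t)), c.IsCycle ∧ c.support.card = s * t ∧
      Commute c σ :=
  stmt10_general s t hs σ h
end

section
/- Let k be a field of characteristic p > 0 and V a finite-dimensional vector space with the divided power algebra D(V) (reduction mod p of the divided power ℤ-form inside S(V_ℚ)). Let B = ⊕_{r≥2} D_1^r(V), the span of divided power monomials of degree ≥ 2 with all exponents < p. Then B is closed under multiplication and stable under all divided power operations γ_i, i ≥ 1 (i.e., γ_i(x) ∈ B for x ∈ B). -/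
/-!
Products of two monomials: `γ_s(y) γ_t(y) = C(s+t, s) γ_{s+t}(y)`, and `p ∣ C(s+t, s)` once
`s + t ≥ p` with `s, t < p`. Divided powers: since `γ_n(x + z) = Σ_j γ_j(x) γ_{n-j}(z)` and `B` is
closed under products, it suffices to treat a monomial `a`. For `n < p`, `γ_n(a) = a^n / n!`.
For `n ≥ p`, write `a = u γ_t(y_j)` with `t ≥ 1`, so that
`γ_n(a) = u^n γ_n(γ_t(y_j)) = u^n (nt)! / ((t!)^n n!) γ_{nt}(y_j)`. If `2 ≤ t < p ≤ nt` the
coefficient is divisible by `p`; if `t = 1` then `u ∈ I` and `u^p = p! γ_p(u) = 0`.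
-/

open Nat Finset

theorem Nat.Prime.dvd_uniformBell {p n t : ℕ} (hp : p.Prime) (ht : 2 ≤ t) (htp : t < p)
    (hpn : p ≤ n * t) : p ∣ n.uniformBell t := by
  have ht_not_dvd : ¬ t ∣ p := fun h => by
    rcases hp.eq_one_or_self_of_dvd t h with h | h <;> omega
  set s := p / t
  have hs_lt : s * t < p := (Nat.div_mul_le_self p t).lt_of_ne
    fun h => ht_not_dvd ⟨s, by rw [← h, mul_comm]⟩
  have hlt_s : p < s * t + t := Nat.lt_div_mul_add (by omega)
  have hsn : s < n := Nat.lt_of_mul_lt_mul_right (hs_lt.trans_le hpn)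
  rw [Nat.uniformBell_eq]
  exact (hp.dvd_choose (by omega) (by omega) (by omega)).trans
    (dvd_prod_of_mem _ (mem_range.mpr hsn))

theorem Submodule.mul_mem_span_of_mul_mem {R A : Type*} [CommSemiring R] [Semiring A]
    [Algebra R A] {S : Set A} (hS : ∀ a ∈ S, ∀ b ∈ S, a * b ∈ span R S) {a b : A}
    (ha : a ∈ span R S) (hb : b ∈ span R S) : a * b ∈ span R S := by
  have hab := mul_mem_mul ha hb
  rw [span_mul_span] at hab
  exact span_le.mpr (by rintro _ ⟨a, ha, b, hb, rfl⟩; exact hS a ha b hb) hab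

theorem Submodule.pow_mem_of_mul_mem {R A : Type*} [CommSemiring R] [Semiring A]
    [Module R A] {M : Submodule R A} (hM : ∀ a ∈ M, ∀ b ∈ M, a * b ∈ M) {x : A} (hx : x ∈ M)
    {n : ℕ} (hn : n ≠ 0) : x ^ n ∈ M := by
  induction n with
  | zero => exact absurd rfl hn
  | succ n ih =>
    rcases eq_or_ne n 0 with rfl | hn'
    · rwa [pow_one]
    · rw [pow_succ]; exact hM _ (ih hn') _ hx

namespace DividedPowers

variable {A : Type*} [CommSemiring A]

open Classical in
/-- Mathlib's `DividedPowers` requires `dpow` to vanish outside `I`. -/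
noncomputable def extendByZero (I : Ideal A) (γ : ℕ → A → A)
    (hγ0 : ∀ x ∈ I, γ 0 x = 1)
    (hγ1 : ∀ x ∈ I, γ 1 x = x)
    (hmem : ∀ i, 1 ≤ i → ∀ x ∈ I, γ i x ∈ I)
    (hadd : ∀ i, ∀ x ∈ I, ∀ y ∈ I,
      γ i (x + y) = ∑ j ∈ Finset.range (i + 1), γ j x * γ (i - j) y)
    (hmul : ∀ i, ∀ x : A, ∀ y ∈ I, γ i (x * y) = x ^ i * γ i y)
    (hpow : ∀ i j, ∀ x ∈ I,
      γ i x * γ j x = ((Nat.choose (i + j) i : ℕ) : A) * γ (i + j) x)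
    (hcomp : ∀ i j, ∀ x ∈ I,
      γ i (γ j x) =
        ((Nat.factorial (i * j) / (Nat.factorial j ^ i * Nat.factorial i) : ℕ) : A)
          * γ (i * j) x) :
    DividedPowers I where
  dpow n x := if x ∈ I then γ n x else 0
  dpow_null hx := if_neg hx
  dpow_zero hx := by rw [if_pos hx, hγ0 _ hx]
  dpow_one hx := by rw [if_pos hx, hγ1 _ hx]
  dpow_mem hn hx := by rw [if_pos hx]; exact hmem _ (by omega) _ hx
  dpow_add hx hy := by
    rw [if_pos (I.add_mem hx hy), hadd _ _ hx _ hy,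
      Finset.Nat.sum_antidiagonal_eq_sum_range_succ_mk]
    simp only [if_pos hx, if_pos hy]
  dpow_mul hx := by rw [if_pos (I.mul_mem_left _ hx), if_pos hx, hmul _ _ _ hx]
  mul_dpow hx := by rw [if_pos hx, if_pos hx, if_pos hx, hpow _ _ _ hx]
  dpow_comp hn hx := by
    rw [if_pos hx, if_pos hx, if_pos (hmem _ (by omega) _ hx), hcomp _ _ _ hx,
      uniformBell_eq_div _ hn]

variable {I : Ideal A}

theorem pow_eq_zero_of_le (hI : DividedPowers I) {p : ℕ} [CharP A p] (hp : p ≠ 0) {x : A}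
    (hx : x ∈ I) {n : ℕ} (hn : p ≤ n) : x ^ n = 0 := by
  have hxp : x ^ p = 0 :=
    nilpotent_of_mem_dpIdeal hp (fun _ => by rw [nsmul_eq_mul, CharP.cast_eq_zero, zero_mul]) hI hx
  rw [← Nat.add_sub_cancel' hn, pow_add, hxp, zero_mul]

variable (hI : DividedPowers I)

theorem dpow_mul_eq_zero {p : ℕ} [CharP A p] (hp : p ≠ 0) {x y : A} (hx : x ∈ I) (hy : y ∈ I)
    {n : ℕ} (hn : p ≤ n) : hI.dpow n (x * y) = 0 := by
  rw [hI.dpow_mul hy, hI.pow_eq_zero_of_le hp hx hn, zero_mul]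

theorem dpow_dpow_eq_zero {p : ℕ} [CharP A p] (hp : p.Prime) {x : A} (hx : x ∈ I) {n t : ℕ}
    (ht : 2 ≤ t) (htp : t < p) (hn : p ≤ n * t) : hI.dpow n (hI.dpow t x) = 0 := by
  rw [hI.dpow_comp (by omega) hx,
    (CharP.cast_eq_zero_iff A p _).mpr (hp.dvd_uniformBell ht htp hn), zero_mul]

theorem dpow_eq_inv_factorial_smul_pow {k : Type*} [Field k] [Algebra k A] {p : ℕ} [CharP k p]
    (hp : p.Prime) {x : A} (hx : x ∈ I) {n : ℕ} (hn : n < p) :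
    hI.dpow n x = (n ! : k)⁻¹ • x ^ n := by
  have hfac : (n ! : k) ≠ 0 := by
    rw [Ne, CharP.cast_eq_zero_iff k p, hp.dvd_factorial]
    omega
  rw [← hI.factorial_mul_dpow_eq_pow hx, ← map_natCast (algebraMap k A), ← Algebra.smul_def,
    inv_smul_smul₀ hfac]

theorem dpow_mem_of_mem_span {k : Type*} [CommSemiring k] [Algebra k A] {S : Set A}
    {M : Submodule k A} (hSI : S ⊆ I) (hM : ∀ a ∈ M, ∀ b ∈ M, a * b ∈ M)
    (hS : ∀ s ∈ S, ∀ n ≠ 0, hI.dpow n s ∈ M) {a : A} (ha : a ∈ Submodule.span k S) {n : ℕ}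
    (hn : n ≠ 0) : hI.dpow n a ∈ M := by
  have mem_I : ∀ {x}, x ∈ Submodule.span k S → x ∈ I :=
    fun hx => Submodule.span_le (p := I.restrictScalars k) |>.mpr hSI hx
  induction ha using Submodule.span_induction generalizing n with
  | mem x hx => exact hS x hx n hn
  | zero => rw [hI.dpow_eval_zero hn]; exact M.zero_mem
  | add x z hx hz ihx ihz =>
    rw [hI.dpow_add (mem_I hx) (mem_I hz)]
    refine M.sum_mem fun ⟨i, j⟩ hij => ?_
    rw [HasAntidiagonal.mem_antidiagonal] at hij
    rcases eq_or_ne i 0 with rfl | hi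
    · rw [hI.dpow_zero (mem_I hx), one_mul]; exact ihz (by omega)
    rcases eq_or_ne j 0 with rfl | hj
    · rw [hI.dpow_zero (mem_I hz), mul_one]; exact ihx hi
    exact hM _ (ihx hi) _ (ihz hj)
  | smul c x hx ihx =>
    rw [Algebra.smul_def, hI.dpow_mul (mem_I hx), ← map_pow, ← Algebra.smul_def]
    exact M.smul_mem _ (ihx hn)

variable {ι : Type*} [Fintype ι] {y : ι → A} {p : ℕ}

/-- The paper's `⊕_{r ≥ 2} D_1^r(V)` is the span of these monomials. -/
def truncatedMonomials (y : ι → A) (p : ℕ) : Set A :=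
  {a | ∃ t : ι → ℕ, (∀ i, t i < p) ∧ 2 ≤ ∑ i, t i ∧ a = ∏ i, hI.dpow (t i) (y i)}

theorem truncatedMonomials_subset (hy : ∀ i, y i ∈ I) : hI.truncatedMonomials y p ⊆ I := by
  rintro _ ⟨t, -, ht, rfl⟩
  obtain ⟨j, -, hj⟩ := exists_ne_zero_of_sum_ne_zero (s := univ) (f := t) (by omega)
  exact I.prod_mem (mem_univ j) (hI.dpow_mem hj (hy j))

theorem mul_mem_span_truncatedMonomials_of_mem {k : Type*} [CommSemiring k] [Algebra k A]
    [CharP A p] (hp : p.Prime) (hy : ∀ i, y i ∈ I) {a b : A} (ha : a ∈ hI.truncatedMonomials y p)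
    (hb : b ∈ hI.truncatedMonomials y p) :
    a * b ∈ Submodule.span k (hI.truncatedMonomials y p) := by
  obtain ⟨t, htp, ht, rfl⟩ := ha
  obtain ⟨s, hsp, hs, rfl⟩ := hb
  have hprod : (∏ i, hI.dpow (t i) (y i)) * ∏ i, hI.dpow (s i) (y i) =
      ((∏ i, (t i + s i).choose (t i) : ℕ) : A) * ∏ i, hI.dpow (t i + s i) (y i) := by
    rw [← prod_mul_distrib, Nat.cast_prod, ← prod_mul_distrib]
    exact prod_congr rfl fun i _ => hI.mul_dpow (hy i)
  rw [hprod]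
  by_cases hlt : ∀ i, t i + s i < p
  · rw [← map_natCast (algebraMap k A), ← Algebra.smul_def]
    refine Submodule.smul_mem _ _ (Submodule.subset_span ⟨_, hlt, ?_, rfl⟩)
    rw [sum_add_distrib]
    omega
  · simp only [not_forall, not_lt] at hlt
    obtain ⟨j, hj⟩ := hlt
    have hdvd : p ∣ ∏ i, (t i + s i).choose (t i) :=
      (hp.dvd_choose_add (htp j) (hsp j) hj).trans (dvd_prod_of_mem _ (mem_univ j))
    rw [(CharP.cast_eq_zero_iff A p _).mpr hdvd, zero_mul]
    exact Submodule.zero_mem _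

theorem mul_mem_span_truncatedMonomials {k : Type*} [CommSemiring k] [Algebra k A] [CharP A p]
    (hp : p.Prime) (hy : ∀ i, y i ∈ I) :
    ∀ a ∈ Submodule.span k (hI.truncatedMonomials y p),
      ∀ b ∈ Submodule.span k (hI.truncatedMonomials y p),
        a * b ∈ Submodule.span k (hI.truncatedMonomials y p) :=
  fun _ ha _ hb => Submodule.mul_mem_span_of_mul_mem
    (fun _ ha _ hb => hI.mul_mem_span_truncatedMonomials_of_mem hp hy ha hb) ha hb

theorem dpow_eq_zero_of_mem_truncatedMonomials [CharP A p] (hp : p.Prime) (hy : ∀ i, y i ∈ I)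
    {a : A} (ha : a ∈ hI.truncatedMonomials y p) {n : ℕ} (hn : p ≤ n) : hI.dpow n a = 0 := by
  classical
  obtain ⟨t, htp, ht, rfl⟩ := ha
  obtain ⟨j, -, hj⟩ := exists_ne_zero_of_sum_ne_zero (s := univ) (f := t) (by omega)
  rw [← mul_prod_erase univ _ (mem_univ j), mul_comm]
  set u := ∏ i ∈ univ.erase j, hI.dpow (t i) (y i)
  rcases le_or_gt 2 (t j) with htj | htj
  · rw [hI.dpow_mul (hI.dpow_mem hj (hy j)),
      hI.dpow_dpow_eq_zero hp (hy j) htj (htp j)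
        (hn.trans (Nat.le_mul_of_pos_right n (by omega))), mul_zero]
  · -- here `t j = 1`, so another exponent is nonzero and `u` lies in `I` too
    have hu : u ∈ I := by
      have hsum := add_sum_erase univ t (mem_univ j)
      obtain ⟨i, hi, hti⟩ := exists_ne_zero_of_sum_ne_zero (s := univ.erase j) (f := t) (by omega)
      exact I.prod_mem hi (hI.dpow_mem hti (hy i))
    exact hI.dpow_mul_eq_zero hp.ne_zero hu (hI.dpow_mem hj (hy j)) hn

theorem dpow_mem_span_truncatedMonomials {k : Type*} [Field k] [Algebra k A] [CharP k p]
    [CharP A p] (hp : p.Prime) (hy : ∀ i, y i ∈ I) {a : A}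
    (ha : a ∈ Submodule.span k (hI.truncatedMonomials y p)) {n : ℕ} (hn : n ≠ 0) :
    hI.dpow n a ∈ Submodule.span k (hI.truncatedMonomials y p) := by
  have hmul := hI.mul_mem_span_truncatedMonomials (k := k) hp hy
  refine hI.dpow_mem_of_mem_span (hI.truncatedMonomials_subset hy) hmul
    (fun s hs n hn => ?_) ha hn
  rcases lt_or_ge n p with hnp | hpn
  · rw [hI.dpow_eq_inv_factorial_smul_pow (k := k) hp (hI.truncatedMonomials_subset hy hs) hnp]
    exact Submodule.smul_mem _ _
      (Submodule.pow_mem_of_mul_mem hmul (Submodule.subset_span hs) hn)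
  · rw [hI.dpow_eq_zero_of_mem_truncatedMonomials hp hy hs hpn]
    exact Submodule.zero_mem _

end DividedPowers

theorem stmt12_general {k A : Type*} [Field k] [CommRing A] [Algebra k A]
    (p : ℕ) (hp : p.Prime) [CharP k p] [CharP A p]
    (I : Ideal A) (γ : ℕ → A → A)
    (hγ0 : ∀ x ∈ I, γ 0 x = 1)
    (hγ1 : ∀ x ∈ I, γ 1 x = x)
    (hmem : ∀ i, 1 ≤ i → ∀ x ∈ I, γ i x ∈ I)
    (hadd : ∀ i, ∀ x ∈ I, ∀ y ∈ I,
      γ i (x + y) = ∑ j ∈ Finset.range (i + 1), γ j x * γ (i - j) y)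
    (hmul : ∀ i, ∀ x : A, ∀ y ∈ I, γ i (x * y) = x ^ i * γ i y)
    (hpow : ∀ i j, ∀ x ∈ I,
      γ i x * γ j x = ((Nat.choose (i + j) i : ℕ) : A) * γ (i + j) x)
    (hcomp : ∀ i j, ∀ x ∈ I,
      γ i (γ j x) =
        ((Nat.factorial (i * j) / (Nat.factorial j ^ i * Nat.factorial i) : ℕ) : A)
          * γ (i * j) x)
    (m : ℕ) (y : Fin m → A) (hy : ∀ i, y i ∈ I)
    (B : Submodule k A)
    (hB : B = Submodule.span k
      {a : A | ∃ t : Fin m → ℕ, (∀ i, t i < p) ∧ 2 ≤ ∑ i, t i ∧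
        a = ∏ i, γ (t i) (y i)}) :
    (∀ a ∈ B, ∀ b ∈ B, a * b ∈ B) ∧ (∀ i, 1 ≤ i → ∀ a ∈ B, γ i a ∈ B) := by
  set hI := DividedPowers.extendByZero I γ hγ0 hγ1 hmem hadd hmul hpow hcomp
  have hγ : ∀ n, ∀ x ∈ I, γ n x = hI.dpow n x := fun n x hx => (if_pos hx).symm
  have hS : {a : A | ∃ t : Fin m → ℕ, (∀ i, t i < p) ∧ 2 ≤ ∑ i, t i ∧
      a = ∏ i, γ (t i) (y i)} = hI.truncatedMonomials y p := by
    simp only [DividedPowers.truncatedMonomials, hγ _ _ (hy _)]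
  rw [hS] at hB
  subst hB
  refine ⟨hI.mul_mem_span_truncatedMonomials hp hy, fun i hi a ha => ?_⟩
  have haI : a ∈ I :=
    (Submodule.span_le (p := I.restrictScalars k)).mpr (hI.truncatedMonomials_subset hy) ha
  rw [hγ i a haI]
  exact hI.dpow_mem_span_truncatedMonomials hp hy ha (by omega)

/-- Let `k` be a field of characteristic `p > 0` and let `A` be the divided power
algebra `D(V)` of a vector space `V` with basis `y_1, …, y_m`: a commutative
`k`-algebra of characteristic `p` spanned by the divided power monomials
`Π_i γ_{t_i}(y_i)`, equipped with divided power operations `γ_i` on an ideal `I`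
containing the `y_i`, satisfying the usual divided power axioms
`γ_0(x) = 1`, `γ_1(x) = x`, `γ_i(x) ∈ I` for `i ≥ 1`,
`γ_i(x+y) = Σ_j γ_j(x) γ_{i-j}(y)`, `γ_i(xy) = x^i γ_i(y)`,
`γ_i(x) γ_j(x) = C(i+j,i) γ_{i+j}(x)` and
`γ_i(γ_j(x)) = ((ij)!/((j!)^i i!)) γ_{ij}(x)`.
Let `B = ⊕_{r ≥ 2} D_1^r(V)` be the `k`-span of the divided power monomials of degree
`≥ 2 ` all of whose exponents are `< p`. Then `B` is closed under multiplication and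
stable under all divided power operations `γ_i`, `i ≥ 1`. -/
theorem stmt12 {k A : Type*} [Field k] [CommRing A] [Algebra k A]
    (p : ℕ) (hp : p.Prime) [CharP k p] [CharP A p]
    (I : Ideal A) (γ : ℕ → A → A)
    (hγ0 : ∀ x ∈ I, γ 0 x = 1)
    (hγ1 : ∀ x ∈ I, γ 1 x = x)
    (hmem : ∀ i, 1 ≤ i → ∀ x ∈ I, γ i x ∈ I)
    (hadd : ∀ i, ∀ x ∈ I, ∀ y ∈ I,
      γ i (x + y) = ∑ j ∈ Finset.range (i + 1), γ j x * γ (i - j) y)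
    (hmul : ∀ i, ∀ x : A, ∀ y ∈ I, γ i (x * y) = x ^ i * γ i y)
    (hpow : ∀ i j, ∀ x ∈ I,
      γ i x * γ j x = ((Nat.choose (i + j) i : ℕ) : A) * γ (i + j) x)
    (hcomp : ∀ i j, ∀ x ∈ I,
      γ i (γ j x) =
        ((Nat.factorial (i * j) / (Nat.factorial j ^ i * Nat.factorial i) : ℕ) : A)
          * γ (i * j) x)
    (m : ℕ) (y : Fin m → A) (hy : ∀ i, y i ∈ I)
    (hbasis : Submodule.span k
      {a : A | ∃ t : Fin m → ℕ, a = ∏ i, γ (t i) (y i)} = ⊤)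
    (B : Submodule k A)
    (hB : B = Submodule.span k
      {a : A | ∃ t : Fin m → ℕ, (∀ i, t i < p) ∧ 2 ≤ ∑ i, t i ∧
        a = ∏ i, γ (t i) (y i)}) :
    (∀ a ∈ B, ∀ b ∈ B, a * b ∈ B) ∧ (∀ i, 1 ≤ i → ∀ a ∈ B, γ i a ∈ B) :=
  stmt12_general p hp I γ hγ0 hγ1 hmem hadd hmul hpow hcomp m y hy B hB
end
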